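/- arXiv:1903.05204 — 8 statements merged into one kernel-verified Lean document; each statement's English description precedes it below -/
import Mathlib

section
/- If X and Y are n×k real matrices with X^T X = I_k and Y^T Y = I_k, and z is a unit vector in R^k, then ‖(I_k + X^T Y) z‖₂² ≥ 3 - ‖X - Y‖_F², where ‖·‖_F denotes the Frobenius norm. -/
open Matrix

/-- Squared Frobenius norm of a matrix. -/
noncomputable def frobSq {n k : ℕ} (A : Matrix (Fin n) (Fin k) ℝ) : ℝ :=
  ∑ i, ∑ j, (A i j) ^ 2

/-- Euclidean norm of a vector. -/
noncomputable def enorm {k : ℕ} (v : Fin k → ℝ) : ℝ :=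
  Real.sqrt (∑ i, (v i) ^ 2)

/-!
Write `x = X z` and `y = Y z`. Since `X` and `Y` are isometries, `‖x‖ = ‖y‖ = 1`, and
`zᵀ Xᵀ Y z = ⟪x, y⟫`, so dropping `‖XᵀY z‖²` gives `‖(I + XᵀY) z‖² ≥ 1 + 2 ⟪x, y⟫ = 3 - ‖(X - Y) z‖²`.
Finally `‖(X - Y) z‖ ≤ ‖X - Y‖_F ‖z‖` by Cauchy–Schwarz on each row.
-/

theorem enorm_sq {k : ℕ} (v : Fin k → ℝ) : _root_.enorm v ^ 2 = v ⬝ᵥ v := by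
  rw [_root_.enorm, Real.sq_sqrt (Finset.sum_nonneg fun i _ => sq_nonneg _)]
  simp only [dotProduct, sq]

theorem dotProduct_self_nonneg_real {ι : Type*} [Fintype ι] (v : ι → ℝ) : 0 ≤ v ⬝ᵥ v :=
  Finset.sum_nonneg fun i _ => mul_self_nonneg (v i)

section DotProduct

variable {ι : Type*} [Fintype ι] {R : Type*} [CommRing R]

theorem add_dotProduct_self (v w : ι → R) :
    (v + w) ⬝ᵥ (v + w) = v ⬝ᵥ v + 2 * (v ⬝ᵥ w) + w ⬝ᵥ w := by
  rw [add_dotProduct, dotProduct_add, dotProduct_add, dotProduct_comm w v]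
  ring

theorem sub_dotProduct_self (v w : ι → R) :
    (v - w) ⬝ᵥ (v - w) = v ⬝ᵥ v - 2 * (v ⬝ᵥ w) + w ⬝ᵥ w := by
  rw [sub_dotProduct, dotProduct_sub, dotProduct_sub, dotProduct_comm w v]
  ring

variable {κ : Type*} [Fintype κ]

theorem mulVec_dotProduct_mulVec (B C : Matrix ι κ R) (z : κ → R) :
    B *ᵥ z ⬝ᵥ C *ᵥ z = z ⬝ᵥ (Bᵀ * C) *ᵥ z := by
  rw [← mulVec_mulVec, dotProduct_mulVec z, vecMul_transpose]

theorem mulVec_dotProduct_self_of_transpose_mul_self_eq_one [DecidableEq κ]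
    {X : Matrix ι κ R} (hX : Xᵀ * X = 1) (z : κ → R) :
    X *ᵥ z ⬝ᵥ X *ᵥ z = z ⬝ᵥ z := by
  rw [mulVec_dotProduct_mulVec, hX, one_mulVec]

end DotProduct

theorem mulVec_dotProduct_self_le_frobSq_mul {n k : ℕ} (A : Matrix (Fin n) (Fin k) ℝ)
    (z : Fin k → ℝ) : A *ᵥ z ⬝ᵥ A *ᵥ z ≤ frobSq A * (z ⬝ᵥ z) := by
  have hz : z ⬝ᵥ z = ∑ j, z j ^ 2 := by simp only [dotProduct, sq]
  rw [frobSq, hz, Finset.sum_mul]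
  refine Finset.sum_le_sum fun i _ => ?_
  calc (A *ᵥ z) i * (A *ᵥ z) i = (∑ j, A i j * z j) ^ 2 := by rw [sq]; rfl
    _ ≤ (∑ j, A i j ^ 2) * ∑ j, z j ^ 2 := Finset.sum_mul_sq_le_sq_mul_sq _ _ _

theorem stmt0 {n k : ℕ} (X Y : Matrix (Fin n) (Fin k) ℝ)
    (hX : Xᵀ * X = 1) (hY : Yᵀ * Y = 1)
    (z : Fin k → ℝ) (hz : _root_.enorm z = 1) :
    _root_.enorm ((1 + Xᵀ * Y).mulVec z) ^ 2 ≥ 3 - frobSq (X - Y) := by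
  have hzz : z ⬝ᵥ z = 1 := by rw [← enorm_sq, hz, one_pow]
  have hdiff : (X - Y) *ᵥ z ⬝ᵥ (X - Y) *ᵥ z = 2 - 2 * (z ⬝ᵥ (Xᵀ * Y) *ᵥ z) := by
    rw [sub_mulVec, sub_dotProduct_self, mulVec_dotProduct_self_of_transpose_mul_self_eq_one hX,
      mulVec_dotProduct_self_of_transpose_mul_self_eq_one hY, mulVec_dotProduct_mulVec, hzz]
    ring
  have hfrob := mulVec_dotProduct_self_le_frobSq_mul (X - Y) z
  rw [hzz, mul_one, hdiff] at hfrob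
  rw [enorm_sq, add_mulVec, one_mulVec, add_dotProduct_self, hzz]
  linarith [dotProduct_self_nonneg_real ((Xᵀ * Y) *ᵥ z)]
end

section
/- If X and Y are n×k matrices with X^T X = Y^T Y = I_k and ‖X - Y‖_F² < 3, then the matrix I_k + X^T Y is invertible and its spectral condition number σ_max/σ_min is at most 2(3 - ‖X - Y‖_F²)^{-1/2}. -/
open Matrix

/-- The spectral condition number (sup over unit vectors of ‖Mz‖)/(inf over unit
vectors of ‖Mz‖). -/
noncomputable def condNum {k : ℕ} (M : Matrix (Fin k) (Fin k) ℝ) : ℝ :=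
  (⨆ z : {z : Fin k → ℝ // _root_.enorm z = 1}, _root_.enorm (M.mulVec z)) /
    (⨅ z : {z : Fin k → ℝ // _root_.enorm z = 1}, _root_.enorm (M.mulVec z))

/-! For a unit vector `z`, `‖(1 + XᵀY) z‖ ≤ ‖z‖ + ‖Y z‖ = 2` because `Xᵀ` is a contraction.
From below, Cauchy–Schwarz and polarization give
`‖(1 + XᵀY) z‖ ≥ ⟪z, (1 + XᵀY) z⟫ = 1 + ⟪X z, Y z⟫ = 2 - ‖(X - Y) z‖² / 2 ≥ 2 - ‖X - Y‖_F² / 2`,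
and, for `f = ‖X - Y‖_F² ≤ 4`, `2 - f / 2 ≥ √(3 - f)` since the difference of the squares is `(1 - f / 2)²`.
The lower bound makes `1 + XᵀY` injective, hence invertible. -/

namespace EuclideanEnorm

variable {k : ℕ}

theorem eq_norm_toLp (v : Fin k → ℝ) : _root_.enorm v = ‖WithLp.toLp 2 v‖ := by
  simp [_root_.enorm, EuclideanSpace.norm_eq]

theorem dotProduct_eq_inner (v w : Fin k → ℝ) :
    v ⬝ᵥ w = inner ℝ (WithLp.toLp 2 v) (WithLp.toLp 2 w) := by
  simp [EuclideanSpace.inner_toLp_toLp, dotProduct_comm]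

theorem nonneg (v : Fin k → ℝ) : 0 ≤ _root_.enorm v := Real.sqrt_nonneg _

theorem sq_eq_sum_sq (v : Fin k → ℝ) : _root_.enorm v ^ 2 = ∑ i, v i ^ 2 :=
  Real.sq_sqrt (Finset.sum_nonneg fun _ _ => sq_nonneg _)

theorem eq_sqrt_dotProduct (v : Fin k → ℝ) : _root_.enorm v = √(v ⬝ᵥ v) := by
  simp only [_root_.enorm, dotProduct, sq]

theorem sq_eq_dotProduct (v : Fin k → ℝ) : _root_.enorm v ^ 2 = v ⬝ᵥ v := by
  rw [sq_eq_sum_sq]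
  simp only [dotProduct, sq]

theorem eq_zero_iff {v : Fin k → ℝ} : _root_.enorm v = 0 ↔ v = 0 := by
  rw [eq_norm_toLp, norm_eq_zero, WithLp.toLp_eq_zero]

theorem dotProduct_le_mul (v w : Fin k → ℝ) : v ⬝ᵥ w ≤ _root_.enorm v * _root_.enorm w := by
  rw [dotProduct_eq_inner, eq_norm_toLp, eq_norm_toLp]
  exact real_inner_le_norm _ _

theorem add_le (v w : Fin k → ℝ) : _root_.enorm (v + w) ≤ _root_.enorm v + _root_.enorm w := by
  simpa only [eq_norm_toLp, WithLp.toLp_add] using norm_add_le _ _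

theorem mulVec_sq_le_frobSq_mul {n : ℕ} (A : Matrix (Fin n) (Fin k) ℝ) (z : Fin k → ℝ) :
    _root_.enorm (A *ᵥ z) ^ 2 ≤ frobSq A * _root_.enorm z ^ 2 := by
  rw [sq_eq_sum_sq, sq_eq_sum_sq, frobSq, Finset.sum_mul]
  refine Finset.sum_le_sum fun i _ => ?_
  simpa [mulVec, dotProduct] using Finset.sum_mul_sq_le_sq_mul_sq Finset.univ (A i) z

end EuclideanEnorm

open EuclideanEnorm

theorem Matrix.mulVec_dotProduct_mulVec {m n : ℕ} (A B : Matrix (Fin m) (Fin n) ℝ) (z w : Fin n → ℝ) :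
    (A *ᵥ z) ⬝ᵥ (B *ᵥ w) = z ⬝ᵥ (Aᵀ * B) *ᵥ w := by
  rw [← mulVec_mulVec, dotProduct_transpose_mulVec, dotProduct_comm]

section Orthonormal

variable {n k : ℕ} {X Y : Matrix (Fin n) (Fin k) ℝ}

theorem enorm_mulVec_of_transpose_mul_self (hX : Xᵀ * X = 1) (z : Fin k → ℝ) :
    _root_.enorm (X *ᵥ z) = _root_.enorm z := by
  rw [eq_sqrt_dotProduct, eq_sqrt_dotProduct, mulVec_dotProduct_mulVec, hX, one_mulVec]

theorem enorm_transpose_mulVec_le (hX : Xᵀ * X = 1) (w : Fin n → ℝ) :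
    _root_.enorm (Xᵀ *ᵥ w) ≤ _root_.enorm w := by
  have h : _root_.enorm (Xᵀ *ᵥ w) ^ 2 ≤ _root_.enorm (Xᵀ *ᵥ w) * _root_.enorm w := by
    calc _root_.enorm (Xᵀ *ᵥ w) ^ 2 = (X *ᵥ (Xᵀ *ᵥ w)) ⬝ᵥ w := by
          rw [sq_eq_dotProduct, dotProduct_transpose_mulVec, dotProduct_comm]
      _ ≤ _root_.enorm (X *ᵥ (Xᵀ *ᵥ w)) * _root_.enorm w := dotProduct_le_mul _ _
      _ = _root_.enorm (Xᵀ *ᵥ w) * _root_.enorm w := by rw [enorm_mulVec_of_transpose_mul_self hX]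
  nlinarith [nonneg (Xᵀ *ᵥ w), nonneg w]

theorem enorm_one_add_transpose_mul_mulVec_le (hX : Xᵀ * X = 1) (hY : Yᵀ * Y = 1)
    (z : Fin k → ℝ) : _root_.enorm ((1 + Xᵀ * Y) *ᵥ z) ≤ 2 * _root_.enorm z :=
  calc _root_.enorm ((1 + Xᵀ * Y) *ᵥ z) = _root_.enorm (z + Xᵀ *ᵥ (Y *ᵥ z)) := by
        rw [add_mulVec, one_mulVec, mulVec_mulVec]
    _ ≤ _root_.enorm z + _root_.enorm (Xᵀ *ᵥ (Y *ᵥ z)) := add_le _ _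
    _ ≤ _root_.enorm z + _root_.enorm (Y *ᵥ z) := by gcongr; exact enorm_transpose_mulVec_le hX _
    _ = 2 * _root_.enorm z := by rw [enorm_mulVec_of_transpose_mul_self hY]; ring

theorem mul_enorm_le_enorm_one_add_transpose_mul_mulVec (hX : Xᵀ * X = 1) (hY : Yᵀ * Y = 1)
    (z : Fin k → ℝ) :
    (2 - frobSq (X - Y) / 2) * _root_.enorm z ≤ _root_.enorm ((1 + Xᵀ * Y) *ᵥ z) := by
  set s := (X *ᵥ z) ⬝ᵥ (Y *ᵥ z)
  have hquad : z ⬝ᵥ (1 + Xᵀ * Y) *ᵥ z = _root_.enorm z ^ 2 + s := by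
    rw [add_mulVec, one_mulVec, dotProduct_add, ← mulVec_dotProduct_mulVec, sq_eq_dotProduct]
  have hdist : _root_.enorm ((X - Y) *ᵥ z) ^ 2 = 2 * _root_.enorm z ^ 2 - 2 * s := by
    have hXz : (X *ᵥ z) ⬝ᵥ (X *ᵥ z) = _root_.enorm z ^ 2 := by
      rw [← sq_eq_dotProduct, enorm_mulVec_of_transpose_mul_self hX]
    have hYz : (Y *ᵥ z) ⬝ᵥ (Y *ᵥ z) = _root_.enorm z ^ 2 := by
      rw [← sq_eq_dotProduct, enorm_mulVec_of_transpose_mul_self hY]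
    rw [sq_eq_dotProduct, sub_mulVec, sub_dotProduct, dotProduct_sub, dotProduct_sub, hXz, hYz,
      dotProduct_comm (Y *ᵥ z)]
    ring
  have hfrob := mulVec_sq_le_frobSq_mul (X - Y) z
  have hcs := dotProduct_le_mul z ((1 + Xᵀ * Y) *ᵥ z)
  rcases (nonneg z).eq_or_lt with hz | hz
  · rw [← hz, mul_zero]; exact nonneg _
  · refine le_of_mul_le_mul_left ?_ hz
    nlinarith

end Orthonormal

section ConditionNumber

variable {k : ℕ} {M : Matrix (Fin k) (Fin k) ℝ} {c : ℝ}

theorem isUnit_of_forall_mul_enorm_le (hc : 0 < c)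
    (h : ∀ z, c * _root_.enorm z ≤ _root_.enorm (M *ᵥ z)) : IsUnit M := by
  rw [isUnit_iff_isUnit_det, isUnit_iff_ne_zero]
  intro hdet
  obtain ⟨v, hv, hMv⟩ := exists_mulVec_eq_zero_iff.mpr hdet
  have := h v
  rw [hMv, eq_zero_iff.2 rfl] at this
  exact hv (eq_zero_iff.1 (le_antisymm (nonpos_of_mul_nonpos_right this hc) (nonneg v)))

theorem condNum_le_div {C : ℝ} (hc : 0 < c) (hC : 0 ≤ C)
    (hlow : ∀ z, c * _root_.enorm z ≤ _root_.enorm (M *ᵥ z))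
    (hup : ∀ z, _root_.enorm (M *ᵥ z) ≤ C * _root_.enorm z) : condNum M ≤ C / c := by
  -- for `k = 0` the unit sphere is empty and `condNum M` is the junk value `0 / 0 = 0`
  rcases isEmpty_or_nonempty {z : Fin k → ℝ // _root_.enorm z = 1} with hempty | hne
  · rw [condNum, Real.iInf_of_isEmpty, div_zero]
    positivity
  · refine div_le_div₀ hC (ciSup_le fun z => ?_) hc (le_ciInf fun z => ?_)
    · simpa [z.2] using hup z
    · simpa [z.2] using hlow z

end ConditionNumber

theorem sqrt_three_sub_le {f : ℝ} (hf : f ≤ 4) : √(3 - f) ≤ 2 - f / 2 :=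
  Real.sqrt_le_iff.2 ⟨by linarith, by nlinarith [sq_nonneg (1 - f / 2)]⟩

theorem stmt1_general {n k : ℕ} (X Y : Matrix (Fin n) (Fin k) ℝ)
    (hX : Xᵀ * X = 1) (hY : Yᵀ * Y = 1)
    (hclose : frobSq (X - Y) < 3) :
    IsUnit (1 + Xᵀ * Y) ∧
      condNum (1 + Xᵀ * Y) ≤ 2 * (Real.sqrt (3 - frobSq (X - Y)))⁻¹ := by
  have hc : 0 < √(3 - frobSq (X - Y)) := Real.sqrt_pos.2 (by linarith)
  have hlow (z : Fin k → ℝ) :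
      √(3 - frobSq (X - Y)) * _root_.enorm z ≤ _root_.enorm ((1 + Xᵀ * Y) *ᵥ z) :=
    (mul_le_mul_of_nonneg_right (sqrt_three_sub_le (by linarith)) (nonneg z)).trans
      (mul_enorm_le_enorm_one_add_transpose_mul_mulVec hX hY z)
  refine ⟨isUnit_of_forall_mul_enorm_le hc hlow, ?_⟩
  rw [← div_eq_mul_inv]
  exact condNum_le_div hc zero_le_two hlow (enorm_one_add_transpose_mul_mulVec_le hX hY)

theorem stmt1 {n k : ℕ} (hk : 0 < k) (X Y : Matrix (Fin n) (Fin k) ℝ)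
    (hX : Xᵀ * X = 1) (hY : Yᵀ * Y = 1)
    (hclose : frobSq (X - Y) < 3) :
    IsUnit (1 + Xᵀ * Y) ∧
      condNum (1 + Xᵀ * Y) ≤ 2 * (Real.sqrt (3 - frobSq (X - Y)))⁻¹ :=
  stmt1_general X Y hX hY hclose
end

section
/- Let X, Y be n×k matrices with X^T X = Y^T Y = I_k such that I_k + X^T Y is invertible, and set V = 2Y(I_k + X^T Y)^{-1}. Then V satisfies the Cayley equation (I_n + (1/2)(V X^T - X V^T)) X = (I_n - (1/2)(V X^T - X V^T)) Y. -/
/-!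
Write `A = 1 + Xᵀ Y` and `W = Y A⁻¹`, so that `½ (V Xᵀ - X Vᵀ) = W Xᵀ - X Wᵀ`. Using `Xᵀ X = 1`,
`Yᵀ X = Aᵀ - 1` and `W A = Y`, both sides of the Cayley equation reduce to `W + X A⁻ᵀ`.
-/

open Matrix

section
variable {m n R : Type*} [Fintype m] [Fintype n] [DecidableEq m] [DecidableEq n] [CommRing R]
  {X Y : Matrix m n R} {A : Matrix n n R}


theorem one_add_skew_mul_eq (hX : Xᵀ * X = 1) (hXY : Xᵀ * Y = A - 1) (hA : IsUnit A) :
    (1 + (Y * A⁻¹ * Xᵀ - X * (Y * A⁻¹)ᵀ)) * X = Y * A⁻¹ + X * A⁻¹ᵀ := by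
  have hYX : Yᵀ * X = Aᵀ - 1 := by
    rw [← transpose_transpose X, ← transpose_mul, hXY, transpose_sub, transpose_one]
  have hAt : A⁻¹ᵀ * Aᵀ = 1 := by
    rw [← transpose_mul, mul_nonsing_inv A ((isUnit_iff_isUnit_det A).mp hA), transpose_one]
  calc (1 + (Y * A⁻¹ * Xᵀ - X * (Y * A⁻¹)ᵀ)) * X
      = X + Y * A⁻¹ * (Xᵀ * X) - X * (A⁻¹ᵀ * (Yᵀ * X)) := by
        simp only [Matrix.add_mul, Matrix.sub_mul, Matrix.one_mul, transpose_mul, Matrix.mul_assoc]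
        abel
    _ = Y * A⁻¹ + X * A⁻¹ᵀ := by
        rw [hX, hYX, Matrix.mul_sub, hAt, Matrix.mul_sub]
        simp only [Matrix.mul_one]; abel

theorem one_sub_skew_mul_eq (hY : Yᵀ * Y = 1) (hXY : Xᵀ * Y = A - 1) (hA : IsUnit A) :
    (1 - (Y * A⁻¹ * Xᵀ - X * (Y * A⁻¹)ᵀ)) * Y = Y * A⁻¹ + X * A⁻¹ᵀ := by
  calc (1 - (Y * A⁻¹ * Xᵀ - X * (Y * A⁻¹)ᵀ)) * Y
      = Y - Y * A⁻¹ * (Xᵀ * Y) + X * A⁻¹ᵀ * (Yᵀ * Y) := by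
        simp only [Matrix.sub_mul, Matrix.one_mul, transpose_mul, Matrix.mul_assoc]; abel
    _ = Y * A⁻¹ + X * A⁻¹ᵀ := by
        rw [hY, hXY, Matrix.mul_sub, Matrix.mul_assoc,
          nonsing_inv_mul A ((isUnit_iff_isUnit_det A).mp hA)]
        simp only [Matrix.mul_one]; abel

end

theorem stmt3 {n k : ℕ} (X Y : Matrix (Fin n) (Fin k) ℝ)
    (hX : Xᵀ * X = 1) (hY : Yᵀ * Y = 1)
    (hinv : IsUnit (1 + Xᵀ * Y))
    (V : Matrix (Fin n) (Fin k) ℝ)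
    (hV : V = (2 : ℝ) • (Y * (1 + Xᵀ * Y)⁻¹)) :
    (1 + (1 / 2 : ℝ) • (V * Xᵀ - X * Vᵀ)) * X
      = (1 - (1 / 2 : ℝ) • (V * Xᵀ - X * Vᵀ)) * Y := by
  have hXY : Xᵀ * Y = (1 + Xᵀ * Y) - 1 := (add_sub_cancel_left _ _).symm
  have hskew : (1 / 2 : ℝ) • (V * Xᵀ - X * Vᵀ)
      = Y * (1 + Xᵀ * Y)⁻¹ * Xᵀ - X * (Y * (1 + Xᵀ * Y)⁻¹)ᵀ := by
    rw [hV, transpose_smul, Matrix.smul_mul, Matrix.mul_smul, ← smul_sub, smul_smul]; norm_num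
  rw [hskew, one_add_skew_mul_eq hX hXY hinv, one_sub_skew_mul_eq hY hXY hinv]
end

section
/- Let X, V be n×k matrices and S a symmetric k×k matrix. If V' = V + X S, then V' X^T - X (V')^T = V X^T - X V^T. Consequently, if V solves the Cayley equation (I + (1/2)(V X^T - X V^T)) X = (I - (1/2)(V X^T - X V^T)) Y, then so does V' = V + X S. -/
open Matrix

/-- The contribution `X S Xᵀ` of the shift is symmetric and so cancels in the skew part. -/
theorem Matrix.add_mul_mul_transpose_sub_mul_transpose_of_isSymm {m n R : Type*} [Fintype n]
    [CommRing R] (X V : Matrix m n R) {S : Matrix n n R} (hS : S.IsSymm) :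
    (V + X * S) * Xᵀ - X * (V + X * S)ᵀ = V * Xᵀ - X * Vᵀ := by
  rw [transpose_add, transpose_mul, hS.eq, Matrix.add_mul, Matrix.mul_add, Matrix.mul_assoc]
  abel

theorem stmt4 {n k : ℕ} (X V Y : Matrix (Fin n) (Fin k) ℝ)
    (S : Matrix (Fin k) (Fin k) ℝ) (hS : Sᵀ = S)
    (V' : Matrix (Fin n) (Fin k) ℝ) (hV' : V' = V + X * S) :
    V' * Xᵀ - X * V'ᵀ = V * Xᵀ - X * Vᵀ ∧
      ((1 + (1 / 2 : ℝ) • (V * Xᵀ - X * Vᵀ)) * X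
          = (1 - (1 / 2 : ℝ) • (V * Xᵀ - X * Vᵀ)) * Y →
        (1 + (1 / 2 : ℝ) • (V' * Xᵀ - X * V'ᵀ)) * X
          = (1 - (1 / 2 : ℝ) • (V' * Xᵀ - X * V'ᵀ)) * Y) := by
  have hskew : V' * Xᵀ - X * V'ᵀ = V * Xᵀ - X * Vᵀ :=
    hV' ▸ add_mul_mul_transpose_sub_mul_transpose_of_isSymm X V hS
  exact ⟨hskew, fun hcayley => hskew ▸ hcayley⟩
end

section
/- Let f : R^n → R be convex and differentiable with minimizer x*. Let q_t ≥ 0 satisfy q_0 = 0 and (q_{t+1}+1)² ≤ (q_t+2)² + 1, let step sizes γ_t satisfy γ_t ≤ γ_{t-1} and the sufficient decrease condition f(x_{t+1}) ≤ f(y_t) − (γ_t/2)‖∇f(y_t)‖², and let α_t = q_t/(2 + q_{t+1}). Then the iterates of x_0 = y_0, x_{t+1} = y_t − γ_t ∇f(y_t), y_{t+1} = x_{t+1} + α_t(x_{t+1} − x_t) satisfy f(x_t) − f(x*) ≤ 2(γ_t q_t (q_t+2))^{-1} ‖x_0 − x*‖². -/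
open scoped RealInnerProductSpace

open Set Filter Topology

/-- First-order condition for a convex differentiable function. -/
lemma conv_grad_aux {E : Type*} [NormedAddCommGroup E] [InnerProductSpace ℝ E] [CompleteSpace E]
    {f : E → ℝ} (hconv : ConvexOn ℝ Set.univ f) {p g : E}
    (hg : HasGradientAt f g p) (z : E) : f p + ⟪g, z - p⟫ ≤ f z := by
  set φ : ℝ → ℝ := fun s => f (p + s • (z - p)) with hφdef
  have hc : HasDerivAt (fun s : ℝ => p + s • (z - p)) (z - p) 0 := by
    simpa using ((hasDerivAt_id (0 : ℝ)).smul_const (z - p)).const_add p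
  have hF : HasFDerivAt f (InnerProductSpace.toDual ℝ E g) ((fun s : ℝ => p + s • (z - p)) 0) := by
    simpa using hg.hasFDerivAt
  have hφ : HasDerivAt φ ⟪g, z - p⟫ 0 := by
    have h := hF.comp_hasDerivAt 0 hc
    simp only [InnerProductSpace.toDual_apply_apply] at h
    exact h
  rw [hasDerivAt_iff_tendsto_slope] at hφ
  have hslope : ∀ s ∈ Set.Ioc (0 : ℝ) 1, slope φ 0 s ≤ f z - f p := by
    intro s hs
    have h1 : φ s ≤ (1 - s) * f p + s * f z := by
      have := hconv.2 (Set.mem_univ p) (Set.mem_univ z) (by linarith [hs.2] : (0:ℝ) ≤ 1 - s)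
        (le_of_lt hs.1) (by ring)
      have heq : (1 - s) • p + s • z = p + s • (z - p) := by module
      simpa [heq, smul_eq_mul] using this
    have hφ0 : φ 0 = f p := by simp [hφdef]
    rw [slope_def_field, hφ0, sub_zero, div_le_iff₀ hs.1]
    nlinarith [h1]
  have hmem : Set.Ioc (0:ℝ) 1 ∈ 𝓝[>] (0:ℝ) :=
    Ioc_mem_nhdsGT_of_mem (by norm_num : (0:ℝ) ∈ Set.Ico (0:ℝ) 1)
  have hle : 𝓝[>] (0:ℝ) ≤ 𝓝[≠] (0:ℝ) :=
    nhdsWithin_mono 0 (fun s hs => ne_of_gt hs)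
  have : ⟪g, z - p⟫ ≤ f z - f p :=
    le_of_tendsto (hφ.mono_left hle) (Filter.eventually_of_mem hmem hslope)
  linarith

set_option maxHeartbeats 1000000 in
theorem stmt11 {d : ℕ} (f : EuclideanSpace ℝ (Fin d) → ℝ)
    (f' : EuclideanSpace ℝ (Fin d) → EuclideanSpace ℝ (Fin d))
    (hconv : ConvexOn ℝ Set.univ f)
    (hdiff : ∀ p, HasGradientAt f (f' p) p)
    (xs : EuclideanSpace ℝ (Fin d)) (hmin : ∀ p, f xs ≤ f p)
    (q γ α : ℕ → ℝ)
    (hq0 : q 0 = 0) (hqnonneg : ∀ t, 0 ≤ q t)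
    (hqrec : ∀ t, (q (t + 1) + 1) ^ 2 ≤ (q t + 2) ^ 2 + 1)
    (hγpos : ∀ t, 0 < γ t) (hγmono : ∀ t, γ (t + 1) ≤ γ t)
    (hα : ∀ t, α t = q t / (2 + q (t + 1)))
    (x y : ℕ → EuclideanSpace ℝ (Fin d))
    (hinit : x 0 = y 0)
    (hx : ∀ t, x (t + 1) = y t - γ t • f' (y t))
    (hy : ∀ t, y (t + 1) = x (t + 1) + α t • (x (t + 1) - x t))
    (hdec : ∀ t, f (x (t + 1)) ≤ f (y t) - (γ t / 2) * ‖f' (y t)‖ ^ 2) :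
    ∀ t, γ t * q t * (q t + 2) * (f (x t) - f xs) ≤ 2 * ‖x 0 - xs‖ ^ 2 := by
  have hgrad : ∀ p z, f p + ⟪f' p, z - p⟫ ≤ f z := fun p z => conv_grad_aux hconv (hdiff p) z
  have hΔ : ∀ p, 0 ≤ f p - f xs := fun p => sub_nonneg.2 (hmin p)
  obtain ⟨T, hT⟩ : ∃ T : ℕ → ℝ, ∀ k, T k = (q k + 2) / 2 := ⟨_, fun _ => rfl⟩
  have hT1 : ∀ k, 1 ≤ T k := by
    intro k; have := hqnonneg k; rw [hT]; linarith
  have hT0 : T 0 = 1 := by rw [hT, hq0]; norm_num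
  obtain ⟨z, hzdef⟩ : ∃ z : ℕ → EuclideanSpace ℝ (Fin d),
      ∀ k, z k = T k • y k - (T k - 1) • x k := ⟨_, fun _ => rfl⟩
  have hz0 : z 0 = x 0 := by
    rw [hzdef 0, hT0, hinit]; module
  have hzx : ∀ k, z (k + 1) = T k • x (k + 1) - (T k - 1) • x k := by
    intro k
    have h2q : (0:ℝ) < 2 + q (k + 1) := by have := hqnonneg (k + 1); linarith
    have hTα : T (k + 1) * α k = T k - 1 := by
      simp only [hT, hα]; field_simp; ring
    calc z (k + 1) = T (k + 1) • (x (k + 1) + α k • (x (k + 1) - x k))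
          - (T (k + 1) - 1) • x (k + 1) := by rw [hzdef, hy]
      _ = x (k + 1) + (T (k + 1) * α k) • (x (k + 1) - x k) := by module
      _ = T k • x (k + 1) - (T k - 1) • x k := by rw [hTα]; module
  have hzrec : ∀ k, z (k + 1) = z k - (γ k * T k) • f' (y k) := by
    intro k
    rw [hzx k, hx k, hzdef k]
    module
  have hTT : ∀ k, T (k + 1) * (T (k + 1) - 1) ≤ T k ^ 2 := by
    intro k
    have h := hqrec k
    have h1 := hqnonneg k
    have h2 := hqnonneg (k + 1)
    simp only [hT]
    nlinarith
  have keyB : ∀ k, 2 * γ k * T k ^ 2 * (f (x (k + 1)) - f xs) + ‖z (k + 1) - xs‖ ^ 2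
      ≤ 2 * γ k * (T k * (T k - 1)) * (f (x k) - f xs) + ‖z k - xs‖ ^ 2 := by
    intro k
    have h1 := hgrad (y k) (x k)
    have h2 := hgrad (y k) xs
    have h3 := hdec k
    have hτ := hT1 k
    have hc := hγpos k
    have hIc : (T k - 1) * ⟪f' (y k), x k - y k⟫ + ⟪f' (y k), xs - y k⟫
        = -⟪f' (y k), z k - xs⟫ := by
      simp only [hzdef k, inner_sub_right, real_inner_smul_right]
      ring
    have hkey1 : T k * (f (y k) - f xs) ≤ (T k - 1) * (f (x k) - f xs)
        + ⟪f' (y k), z k - xs⟫ := by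
      have m1 := mul_le_mul_of_nonneg_left h1 (by linarith : (0:ℝ) ≤ T k - 1)
      nlinarith [m1, h2]
    have hnorm : ‖z (k + 1) - xs‖ ^ 2 = ‖z k - xs‖ ^ 2
        - 2 * (γ k * T k) * ⟪f' (y k), z k - xs⟫ + (γ k * T k) ^ 2 * ‖f' (y k)‖ ^ 2 := by
      rw [hzrec k, sub_right_comm, norm_sub_sq_real, real_inner_smul_right, norm_smul,
        real_inner_comm (z k - xs) (f' (y k))]
      simp only [Real.norm_eq_abs, mul_pow, sq_abs]
      ring
    have hτ0 : (0:ℝ) ≤ T k := by linarith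
    have h4 : T k * (f (x (k + 1)) - f xs) ≤ (T k - 1) * (f (x k) - f xs)
        + ⟪f' (y k), z k - xs⟫ - (γ k * T k / 2) * ‖f' (y k)‖ ^ 2 := by
      nlinarith [mul_le_mul_of_nonneg_left h3 hτ0, hkey1]
    have h5 := mul_le_mul_of_nonneg_left h4 (by positivity : (0:ℝ) ≤ 2 * γ k * T k)
    nlinarith [h5, hnorm]
  have inv : ∀ k, 2 * γ k * T k ^ 2 * (f (x (k + 1)) - f xs) + ‖z (k + 1) - xs‖ ^ 2
      ≤ ‖x 0 - xs‖ ^ 2 := by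
    intro k
    induction k with
    | zero =>
      have h := keyB 0
      rw [hz0, hT0] at h
      rw [hT0]
      have := hΔ (x 0)
      nlinarith [h]
    | succ k ih =>
      have h := keyB (k + 1)
      have hmono : γ (k + 1) * (T (k + 1) * (T (k + 1) - 1)) ≤ γ k * T k ^ 2 := by
        have h1 := hTT k
        have h2 := hγmono k
        have h3 := hγpos (k + 1)
        have h4 := hγpos k
        have hTT1 : (0:ℝ) ≤ T (k + 1) * (T (k + 1) - 1) := by
          have := hT1 (k + 1); nlinarith
        nlinarith
      have hm := mul_le_mul_of_nonneg_right hmono (hΔ (x (k + 1)))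
      nlinarith [h, ih, hm]
  intro t
  cases t with
  | zero =>
    rw [hq0]
    have : (0:ℝ) ≤ 2 * ‖x 0 - xs‖ ^ 2 := by positivity
    nlinarith [this]
  | succ k =>
    have h := inv k
    have hq4 : γ (k + 1) * q (k + 1) * (q (k + 1) + 2)
        = 4 * (γ (k + 1) * (T (k + 1) * (T (k + 1) - 1))) := by
      simp only [hT]; ring
    have hmono : γ (k + 1) * (T (k + 1) * (T (k + 1) - 1)) ≤ γ k * T k ^ 2 := by
      have h1 := hTT k
      have h2 := hγmono k
      have h3 := hγpos (k + 1)
      have h4 := hγpos k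
      have hTT1 : (0:ℝ) ≤ T (k + 1) * (T (k + 1) - 1) := by
        have := hT1 (k + 1); nlinarith
      nlinarith
    have hm := mul_le_mul_of_nonneg_right hmono (hΔ (x (k + 1)))
    have hN : (0:ℝ) ≤ ‖z (k + 1) - xs‖ ^ 2 := by positivity
    have hq4' := congrArg (fun r => r * (f (x (k + 1)) - f xs)) hq4
    nlinarith [h, hm, hN, hq4']
end

section
/- With the same hypotheses as the accelerated convergence theorem (f convex differentiable, sequences q_t, γ_t, α_t = q_t/(2+q_{t+1})), the Lyapunov function J_t = γ_t q_t (q_t+2)(f(x_t) − f(x*)) + (1/2)‖2(y_t − x*) + q_t(y_t − x_t)‖² is nonincreasing: J_{t+1} ≤ J_t for all t. -/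
/-!
With `v_t = 2 (y_t - x*) + q_t (y_t - x_t)`, the choice `α_t = q_t / (2 + q_{t+1})` makes the
momentum step collapse to `v_{t+1} = v_t - (2 + q_t) γ_t ∇f(y_t)`. Expanding `‖v_{t+1}‖²`, the
cross term is bounded by the gradient inequality of `f` at `y_t` towards `x*` and `x_t`, and the
`‖∇f(y_t)‖²` term is absorbed by the sufficient-decrease condition. Since
`q_{t+1}(q_{t+1} + 2) = (q_{t+1} + 1)² - 1 ≤ (q_t + 2)²` and `γ_{t+1} ≤ γ_t`, the new weight on
`f(x_{t+1}) - f(x*) ≥ 0` is at most `γ_t (q_t + 2)²`, and the resulting bound equals `J_t` exactly.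
-/

open scoped RealInnerProductSpace

section

variable {E : Type*} [NormedAddCommGroup E] [InnerProductSpace ℝ E]

theorem ConvexOn.inner_sub_le_sub_of_hasGradientAt [CompleteSpace E] {f : E → ℝ} (hconv : ConvexOn ℝ Set.univ f)
    {g w : E} (hg : HasGradientAt f g w) (z : E) :
    ⟪g, z - w⟫ ≤ f z - f w := by
  set φ : ℝ → ℝ := fun t => f (t • (z - w) + w)
  have hφ : ConvexOn ℝ Set.univ φ := by
    simpa [φ, Function.comp_def, AffineMap.lineMap_apply, vadd_eq_add] using
      hconv.comp_affineMap (AffineMap.lineMap w z)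
  have hline : HasDerivAt (fun t : ℝ => t • (z - w) + w) (z - w) 0 := by
    simpa using ((hasDerivAt_id (0 : ℝ)).smul_const (z - w)).add_const w
  have hφ' : HasDerivAt φ ⟪g, z - w⟫ 0 := by
    have hf : HasFDerivAt f (InnerProductSpace.toDual ℝ E g) ((0 : ℝ) • (z - w) + w) := by
      simpa using hg.hasFDerivAt
    simpa [φ, Function.comp_def, InnerProductSpace.toDual_apply_apply] using
      hf.comp_hasDerivAt 0 hline
  have hslope : slope φ 0 1 = f z - f w := by simp [slope_def_field, φ]
  simpa [hslope] using
    hφ.le_slope_of_hasDerivAt (Set.mem_univ 0) (Set.mem_univ 1) one_pos hφ'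

noncomputable def lyapunov (f : E → ℝ) (xs : E) (γ q : ℝ) (x y : E) : ℝ :=
  γ * q * (q + 2) * (f x - f xs) + 1 / 2 * ‖(2 : ℝ) • (y - xs) + q • (y - x)‖ ^ 2

theorem momentum_vector_step {xs x y x' y' g : E} {q q' γ α : ℝ}
    (hα : (2 + q') * α = q) (hx' : x' = y - γ • g) (hy' : y' = x' + α • (x' - x)) :
    (2 : ℝ) • (y' - xs) + q' • (y' - x') =
      (2 : ℝ) • (y - xs) + q • (y - x) - ((2 + q) * γ) • g := by
  have : (2 : ℝ) • (y' - xs) + q' • (y' - x') =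
      (2 : ℝ) • (x' - xs) + ((2 + q') * α) • (x' - x) := by
    rw [hy']; module
  rw [this, hα, hx']; module

theorem two_mul_sub_add_mul_sub_le_inner [CompleteSpace E] {f : E → ℝ}
    (hconv : ConvexOn ℝ Set.univ f) {g y : E} (hg : HasGradientAt f g y) (xs x : E) {q : ℝ}
    (hq : 0 ≤ q) :
    2 * (f y - f xs) + q * (f y - f x) ≤ ⟪g, (2 : ℝ) • (y - xs) + q • (y - x)⟫ := by
  have hxs := hconv.inner_sub_le_sub_of_hasGradientAt hg xs
  have hx := hconv.inner_sub_le_sub_of_hasGradientAt hg x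
  rw [← neg_sub xs, ← neg_sub x, inner_add_right, real_inner_smul_right, real_inner_smul_right,
    inner_neg_right, inner_neg_right]
  linarith [mul_le_mul_of_nonneg_left hx hq]

theorem mul_mul_add_two_le_mul_sq {γ γ' q q' : ℝ} (hγ : 0 ≤ γ) (hγ' : γ' ≤ γ) (hq' : 0 ≤ q')
    (hqrec : (q' + 1) ^ 2 ≤ (q + 2) ^ 2 + 1) :
    γ' * q' * (q' + 2) ≤ γ * (q + 2) ^ 2 := by
  have hq'q : q' * (q' + 2) ≤ (q + 2) ^ 2 := by nlinarith
  calc γ' * q' * (q' + 2) = γ' * (q' * (q' + 2)) := by ring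
    _ ≤ γ * (q + 2) ^ 2 := mul_le_mul hγ' hq'q (by positivity) hγ

theorem lyapunov_step_le [CompleteSpace E] {f : E → ℝ} (hconv : ConvexOn ℝ Set.univ f)
    {xs x y x' y' g : E} {q q' γ γ' α : ℝ} (hg : HasGradientAt f g y) (hmin : f xs ≤ f x')
    (hq : 0 ≤ q) (hq' : 0 ≤ q') (hqrec : (q' + 1) ^ 2 ≤ (q + 2) ^ 2 + 1)
    (hγ : 0 ≤ γ) (hγ' : γ' ≤ γ) (hα : (2 + q') * α = q)
    (hx' : x' = y - γ • g) (hy' : y' = x' + α • (x' - x))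
    (hdec : f x' ≤ f y - γ / 2 * ‖g‖ ^ 2) :
    lyapunov f xs γ' q' x' y' ≤ lyapunov f xs γ q x y := by
  set v := (2 : ℝ) • (y - xs) + q • (y - x)
  set c := (2 + q) * γ
  have hnorm : ‖v - c • g‖ ^ 2 = ‖v‖ ^ 2 - 2 * c * ⟪g, v⟫ + c ^ 2 * ‖g‖ ^ 2 := by
    rw [norm_sub_sq_real, real_inner_smul_right, norm_smul, Real.norm_eq_abs, mul_pow, sq_abs,
      real_inner_comm]
    ring
  have hweight : γ' * q' * (q' + 2) * (f x' - f xs) ≤ γ * (q + 2) ^ 2 * (f x' - f xs) :=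
    mul_le_mul_of_nonneg_right (mul_mul_add_two_le_mul_sq hγ hγ' hq' hqrec) (by linarith)
  have hdescent : γ * (q + 2) ^ 2 * (f x' - f xs) ≤
      γ * (q + 2) ^ 2 * (f y - f xs - γ / 2 * ‖g‖ ^ 2) :=
    mul_le_mul_of_nonneg_left (by linarith) (by positivity)
  have hinner : c * (2 * (f y - f xs) + q * (f y - f x)) ≤ c * ⟪g, v⟫ :=
    mul_le_mul_of_nonneg_left (two_mul_sub_add_mul_sub_le_inner hconv hg xs x hq) (by positivity)
  unfold lyapunov
  rw [momentum_vector_step hα hx' hy', hnorm]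
  linarith

end

theorem stmt12_general {d : ℕ} (f : EuclideanSpace ℝ (Fin d) → ℝ)
    (f' : EuclideanSpace ℝ (Fin d) → EuclideanSpace ℝ (Fin d))
    (hconv : ConvexOn ℝ Set.univ f)
    (hdiff : ∀ p, HasGradientAt f (f' p) p)
    (xs : EuclideanSpace ℝ (Fin d)) (hmin : ∀ p, f xs ≤ f p)
    (q γ α : ℕ → ℝ)
    (hqnonneg : ∀ t, 0 ≤ q t)
    (hqrec : ∀ t, (q (t + 1) + 1) ^ 2 ≤ (q t + 2) ^ 2 + 1)
    (hγpos : ∀ t, 0 < γ t) (hγmono : ∀ t, γ (t + 1) ≤ γ t)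
    (hα : ∀ t, α t = q t / (2 + q (t + 1)))
    (x y : ℕ → EuclideanSpace ℝ (Fin d))
    (hx : ∀ t, x (t + 1) = y t - γ t • f' (y t))
    (hy : ∀ t, y (t + 1) = x (t + 1) + α t • (x (t + 1) - x t))
    (hdec : ∀ t, f (x (t + 1)) ≤ f (y t) - (γ t / 2) * ‖f' (y t)‖ ^ 2)
    (J : ℕ → ℝ)
    (hJ : ∀ t, J t = γ t * q t * (q t + 2) * (f (x t) - f xs)
        + (1 / 2) * ‖(2 : ℝ) • (y t - xs) + q t • (y t - x t)‖ ^ 2) :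
    ∀ t, J (t + 1) ≤ J t := by
  intro t
  have hαq : (2 + q (t + 1)) * α t = q t := by
    rw [hα t]
    field_simp [show 2 + q (t + 1) ≠ 0 by linarith [hqnonneg (t + 1)]]
  rw [hJ, hJ]
  exact lyapunov_step_le hconv (hdiff (y t)) (hmin _) (hqnonneg t) (hqnonneg (t + 1)) (hqrec t)
    (hγpos t).le (hγmono t) hαq (hx t) (hy t) (hdec t)

theorem stmt12 {d : ℕ} (f : EuclideanSpace ℝ (Fin d) → ℝ)
    (f' : EuclideanSpace ℝ (Fin d) → EuclideanSpace ℝ (Fin d))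
    (hconv : ConvexOn ℝ Set.univ f)
    (hdiff : ∀ p, HasGradientAt f (f' p) p)
    (xs : EuclideanSpace ℝ (Fin d)) (hmin : ∀ p, f xs ≤ f p)
    (q γ α : ℕ → ℝ)
    (hq0 : q 0 = 0) (hqnonneg : ∀ t, 0 ≤ q t)
    (hqrec : ∀ t, (q (t + 1) + 1) ^ 2 ≤ (q t + 2) ^ 2 + 1)
    (hγpos : ∀ t, 0 < γ t) (hγmono : ∀ t, γ (t + 1) ≤ γ t)
    (hα : ∀ t, α t = q t / (2 + q (t + 1)))
    (x y : ℕ → EuclideanSpace ℝ (Fin d))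
    (hinit : x 0 = y 0)
    (hx : ∀ t, x (t + 1) = y t - γ t • f' (y t))
    (hy : ∀ t, y (t + 1) = x (t + 1) + α t • (x (t + 1) - x t))
    (hdec : ∀ t, f (x (t + 1)) ≤ f (y t) - (γ t / 2) * ‖f' (y t)‖ ^ 2)
    (J : ℕ → ℝ)
    (hJ : ∀ t, J t = γ t * q t * (q t + 2) * (f (x t) - f xs)
        + (1 / 2) * ‖(2 : ℝ) • (y t - xs) + q t • (y t - x t)‖ ^ 2) :
    ∀ t, J (t + 1) ≤ J t :=
  stmt12_general f f' hconv hdiff xs hmin q γ α hqnonneg hqrec hγpos hγmono hα x y hx hy hdec J hJ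
end

section
/- Let A be a real symmetric n×n matrix with eigenvalues λ_1 < λ_2 ≤ ... ≤ λ_n, and let f(x) = (1/2) x^T A x restricted to the unit sphere S^{n-1}. Then the minimizer of f on the sphere is a unit eigenvector v* for λ_1, and the condition number of the (geodesic) Hessian of f at v*, i.e. the ratio of the largest to smallest values of (d²/dt²)|_{t=0} f(exp_{v*}(t u)) over unit tangent vectors u, equals (λ_n − λ_1)/(λ_2 − λ_1). -/
/-!
Expand everything in the orthonormal eigenbasis `v i`: with `c i = x ⬝ᵥ v i` one has
`x ⬝ᵥ x = ∑ c i ^ 2` and `x ⬝ᵥ A x = ∑ λ i * c i ^ 2`, so on the sphere `x ⬝ᵥ A x` is a convex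
combination of the eigenvalues and is minimised at `v 0`. For a unit tangent vector `u ⊥ v 0`
the cross terms vanish along the great circle, `f (cos t • v 0 + sin t • u) =
(λ 0 cos² t + (u ⬝ᵥ A u) sin² t) / 2`, so the Hessian is `u ⬝ᵥ A u - λ 0`. Since `u` has no
`v 0`-component, `u ⬝ᵥ A u` ranges over `[λ 1, λ (n-1)]`, with both ends attained at eigenvectors.
-/

open Matrix

/-- The Euclidean dot product on `Fin n → ℝ`. -/
noncomputable def dotp {n : ℕ} (v w : Fin n → ℝ) : ℝ := ∑ i, v i * w i

/-- Euclidean norm of a vector. -/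
noncomputable def enorm' {n : ℕ} (v : Fin n → ℝ) : ℝ := Real.sqrt (dotp v v)

theorem enorm'_eq_one_iff {n : ℕ} {x : Fin n → ℝ} : enorm' x = 1 ↔ x ⬝ᵥ x = 1 :=
  Real.sqrt_eq_one

section Orthonormal

variable {ι : Type*} [Fintype ι] [DecidableEq ι] {v : ι → ι → ℝ}
  (horth : ∀ i j, v i ⬝ᵥ v j = if i = j then 1 else 0)
include horth

theorem sum_dotProduct_smul_eq_self (x : ι → ℝ) : ∑ i, (x ⬝ᵥ v i) • v i = x := by
  -- a square matrix with orthonormal rows is orthogonal, so its columns are orthonormal too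
  have hM : (Matrix.of v)ᵀ * Matrix.of v = 1 := by
    refine mul_eq_one_comm.mp ?_
    ext i j
    simpa [mul_apply, one_apply, dotProduct] using horth i j
  calc ∑ i, (x ⬝ᵥ v i) • v i = (Matrix.of v)ᵀ *ᵥ (Matrix.of v *ᵥ x) := by
        rw [mulVec_transpose, vecMul_eq_sum]
        congr! 2 with i
        exact dotProduct_comm _ _
    _ = x := by rw [mulVec_mulVec, hM, one_mulVec]

theorem dotProduct_eq_sum_mul (x y : ι → ℝ) : x ⬝ᵥ y = ∑ i, (x ⬝ᵥ v i) * (y ⬝ᵥ v i) := by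
  conv_lhs => rw [← sum_dotProduct_smul_eq_self horth y]
  simp only [dotProduct_sum, dotProduct_smul, smul_eq_mul, mul_comm]

variable {A : Matrix ι ι ℝ} {lam : ι → ℝ} (heig : ∀ i, A *ᵥ v i = lam i • v i)
include heig

theorem dotProduct_mulVec_eq_sum (x y : ι → ℝ) :
    x ⬝ᵥ (A *ᵥ y) = ∑ i, lam i * (x ⬝ᵥ v i) * (y ⬝ᵥ v i) := by
  conv_lhs => rw [← sum_dotProduct_smul_eq_self horth y]
  simp only [mulVec_sum, mulVec_smul, heig, dotProduct_sum, dotProduct_smul, smul_eq_mul]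
  exact Finset.sum_congr rfl fun i _ => by ring

theorem eigenvector_dotProduct_mulVec (j : ι) (y : ι → ℝ) :
    v j ⬝ᵥ (A *ᵥ y) = lam j * (y ⬝ᵥ v j) := by
  simp [dotProduct_mulVec_eq_sum horth heig, horth]

theorem le_dotProduct_mulVec_self {a : ℝ} {x : ι → ℝ} (hx : x ⬝ᵥ x = 1)
    (h : ∀ i, a ≤ lam i ∨ x ⬝ᵥ v i = 0) : a ≤ x ⬝ᵥ (A *ᵥ x) := by
  rw [dotProduct_mulVec_eq_sum horth heig, ← mul_one a, ← hx, dotProduct_eq_sum_mul horth,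
    Finset.mul_sum]
  refine Finset.sum_le_sum fun i _ => ?_
  rcases h i with hi | hi
  · simpa only [mul_assoc] using mul_le_mul_of_nonneg_right hi (mul_self_nonneg (x ⬝ᵥ v i))
  · simp [hi]

theorem dotProduct_mulVec_self_le {b : ℝ} {x : ι → ℝ} (hx : x ⬝ᵥ x = 1)
    (h : ∀ i, lam i ≤ b) : x ⬝ᵥ (A *ᵥ x) ≤ b := by
  rw [dotProduct_mulVec_eq_sum horth heig, ← mul_one b, ← hx, dotProduct_eq_sum_mul horth,
    Finset.mul_sum]
  refine Finset.sum_le_sum fun i _ => ?_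
  simpa only [mul_assoc] using mul_le_mul_of_nonneg_right (h i) (mul_self_nonneg (x ⬝ᵥ v i))

theorem dotProduct_mulVec_cos_smul_add_sin_smul {j : ι} {u : ι → ℝ} (hu : u ⬝ᵥ v j = 0) (t : ℝ) :
    (Real.cos t • v j + Real.sin t • u) ⬝ᵥ (A *ᵥ (Real.cos t • v j + Real.sin t • u))
      = lam j * Real.cos t ^ 2 + u ⬝ᵥ (A *ᵥ u) * Real.sin t ^ 2 := by
  simp only [mulVec_add, mulVec_smul, heig, add_dotProduct, dotProduct_add, smul_dotProduct,
    dotProduct_smul, eigenvector_dotProduct_mulVec horth heig, horth, hu, smul_eq_mul, if_true]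
  ring

end Orthonormal

theorem dotProduct_mulVec_self_mem_Icc_of_orthogonal {n : ℕ} (h1 : 1 < n) {v : Fin n → Fin n → ℝ}
    (horth : ∀ i j, v i ⬝ᵥ v j = if i = j then 1 else 0) {A : Matrix (Fin n) (Fin n) ℝ}
    {lam : Fin n → ℝ} (heig : ∀ i, A *ᵥ v i = lam i • v i) (hmono : Monotone lam)
    {u : Fin n → ℝ} (hu₀ : u ⬝ᵥ v ⟨0, by omega⟩ = 0) (hu : u ⬝ᵥ u = 1) :
    u ⬝ᵥ (A *ᵥ u) ∈ Set.Icc (lam ⟨1, h1⟩) (lam ⟨n - 1, by omega⟩) := by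
  refine ⟨le_dotProduct_mulVec_self horth heig hu fun i => ?_,
    dotProduct_mulVec_self_le horth heig hu fun i => hmono (Nat.le_sub_one_of_lt i.2)⟩
  rcases eq_or_ne i ⟨0, by omega⟩ with rfl | hi
  · exact .inr hu₀
  · exact .inl (hmono (Nat.one_le_iff_ne_zero.mpr (Fin.val_ne_iff.mpr hi)))

theorem ciSup_div_ciInf_eq_of_mem_Icc {S : Type*} {g : S → ℝ} {a b : ℝ}
    (h : ∀ s, g s ∈ Set.Icc a b) (ha : a ∈ Set.range g) (hb : b ∈ Set.range g) :
    (⨆ s, g s) / (⨅ s, g s) = b / a := by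
  rw [iSup, iInf, IsGreatest.csSup_eq ⟨hb, Set.forall_mem_range.2 fun s => (h s).2⟩,
    IsLeast.csInf_eq ⟨ha, Set.forall_mem_range.2 fun s => (h s).1⟩]

theorem iteratedDeriv_two_cos_sq_add_sin_sq (a b : ℝ) :
    iteratedDeriv 2 (fun t => a * Real.cos t ^ 2 + b * Real.sin t ^ 2) 0 = 2 * (b - a) := by
  have h1 : deriv (fun t => a * Real.cos t ^ 2 + b * Real.sin t ^ 2)
      = fun t => (b - a) * Real.sin (2 * t) := by
    funext t
    have : HasDerivAt (fun t => a * Real.cos t ^ 2 + b * Real.sin t ^ 2)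
        (a * (2 * Real.cos t * -Real.sin t) + b * (2 * Real.sin t * Real.cos t)) t := by
      simpa using (((Real.hasDerivAt_cos t).fun_pow 2).const_mul a).fun_add
        (((Real.hasDerivAt_sin t).fun_pow 2).const_mul b)
    rw [this.deriv, Real.sin_two_mul]
    ring
  rw [iteratedDeriv_succ, iteratedDeriv_one, h1]
  simp [mul_comm]

theorem stmt17 {n : ℕ} (hn : 2 ≤ n)
    (A : Matrix (Fin n) (Fin n) ℝ)
    (lam : Fin n → ℝ) (v : Fin n → Fin n → ℝ)
    (horth : ∀ i j, dotp (v i) (v j) = if i = j then 1 else 0)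
    (heig : ∀ i, A.mulVec (v i) = lam i • v i)
    (hmono : Monotone lam)
    (f : (Fin n → ℝ) → ℝ)
    (hf : ∀ x, f x = (1 / 2) * dotp x (A.mulVec x))
    (Hess : (Fin n → ℝ) → ℝ)
    (hHess : ∀ u, Hess u = iteratedDeriv 2
      (fun t : ℝ => f (Real.cos t • v ⟨0, by omega⟩ + Real.sin t • u)) 0) :
    (∀ x : Fin n → ℝ, enorm' x = 1 → f (v ⟨0, by omega⟩) ≤ f x) ∧
      (⨆ u : {u : Fin n → ℝ // dotp u (v ⟨0, by omega⟩) = 0 ∧ enorm' u = 1}, Hess u)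
        / (⨅ u : {u : Fin n → ℝ // dotp u (v ⟨0, by omega⟩) = 0 ∧ enorm' u = 1}, Hess u)
      = (lam ⟨n - 1, by omega⟩ - lam ⟨0, by omega⟩)
        / (lam ⟨1, by omega⟩ - lam ⟨0, by omega⟩) := by
  set i₀ : Fin n := ⟨0, by omega⟩
  replace horth : ∀ i j, v i ⬝ᵥ v j = if i = j then 1 else 0 := horth
  replace hf : ∀ x, f x = 1 / 2 * (x ⬝ᵥ (A *ᵥ x)) := hf
  have hHess_eq (u : Fin n → ℝ) (hu : u ⬝ᵥ v i₀ = 0) : Hess u = u ⬝ᵥ (A *ᵥ u) - lam i₀ := by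
    have hgeod : (fun t : ℝ => f (Real.cos t • v i₀ + Real.sin t • u))
        = fun t => lam i₀ / 2 * Real.cos t ^ 2 + u ⬝ᵥ (A *ᵥ u) / 2 * Real.sin t ^ 2 := by
      funext t
      rw [hf, dotProduct_mulVec_cos_smul_add_sin_smul horth heig hu]
      ring
    rw [hHess, hgeod, iteratedDeriv_two_cos_sq_add_sin_sq]
    ring
  have htangent (i : Fin n) (hi : i ≠ i₀) : v i ⬝ᵥ v i₀ = 0 ∧ enorm' (v i) = 1 := by
    simp [horth, hi, enorm'_eq_one_iff]
  have hHess_basis (i : Fin n) (hi : i ≠ i₀) : Hess (v i) = lam i - lam i₀ := by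
    rw [hHess_eq _ (htangent i hi).1, eigenvector_dotProduct_mulVec horth heig, horth, if_pos rfl,
      mul_one]
  refine ⟨fun x hx => ?_, ?_⟩
  · rw [hf, hf, eigenvector_dotProduct_mulVec horth heig, horth, if_pos rfl, mul_one]
    gcongr
    exact le_dotProduct_mulVec_self horth heig (enorm'_eq_one_iff.mp hx)
      fun i => .inl (hmono (show i₀ ≤ i from Nat.zero_le _))
  have hne₁ : (⟨1, by omega⟩ : Fin n) ≠ i₀ := by simp [i₀, Fin.ext_iff]
  have hneₙ : (⟨n - 1, by omega⟩ : Fin n) ≠ i₀ := by simp [i₀, Fin.ext_iff]; omega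
  refine ciSup_div_ciInf_eq_of_mem_Icc (fun ⟨u, hu, hunit⟩ => ?_)
    ⟨⟨v _, htangent _ hne₁⟩, hHess_basis _ hne₁⟩ ⟨⟨v _, htangent _ hneₙ⟩, hHess_basis _ hneₙ⟩
  rw [hHess_eq u hu, Set.mem_Icc, sub_le_sub_iff_right, sub_le_sub_iff_right]
  exact dotProduct_mulVec_self_mem_Icc_of_orthogonal (by omega) horth heig hmono hu
    (enorm'_eq_one_iff.mp hunit)
end

section
/- Let λ_1 < λ_2 < ... < λ_{k+1} ≤ ... ≤ λ_n and consider, over positive increasing weights 0 < α_1 < ... < α_k, the quantity κ(α) = α_k(λ_n − λ_1) / min{ α_1(λ_{k+1} − λ_k), min_{1≤i<k} (λ_{k-i+1} − λ_{k-i})(α_{i+1} − α_i) }. Then the minimum over all such α of κ(α) equals (λ_n − λ_1) Σ_{i=1}^k 1/(λ_{i+1} − λ_i), and it is achieved by α_i = Σ_{j=0}^{i-1} 1/(λ_{k-j+1} − λ_{k-j}) (or any positive multiple thereof). -/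
/-- The denominator appearing in the condition number of the Brockett cost:
`min{ α₁(λ_{k+1} − λ_k), min_{1 ≤ i < k} (λ_{k−i+1} − λ_{k−i})(α_{i+1} − α_i) }`. -/
noncomputable def brockettDenom (k : ℕ) (lam α : ℕ → ℝ) : ℝ :=
  sInf ({α 1 * (lam (k + 1) - lam k)} ∪
    {r : ℝ | ∃ i, 1 ≤ i ∧ i < k ∧ r = (lam (k - i + 1) - lam (k - i)) * (α (i + 1) - α i)})

/-- The condition number `κ(α)` of the Brockett cost with weights `α`. -/
noncomputable def brockettKappa (k n : ℕ) (lam α : ℕ → ℝ) : ℝ :=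
  α k * (lam n - lam 1) / brockettDenom k lam α

/-- Admissibility of the weights: `0 < α₁ < α₂ < ... < α_k`. -/
def brockettAdm (k : ℕ) (α : ℕ → ℝ) : Prop :=
  0 < α 1 ∧ ∀ i, 1 ≤ i → i < k → α i < α (i + 1)

/-!
Write `g j = λ_{k-j+1} - λ_{k-j}` and `D(α)` for the denominator of `κ(α)`. Since `D(α)` is at most
`g 0 · α₁` and at most `g j · (α_{j+1} - α_j)` for `1 ≤ j < k`, dividing by `g j` and telescoping gives
`D(α) · Σ_{j<k} 1/g j ≤ α_k`, i.e. `κ(α) ≥ (λ_n - λ_1) Σ_i 1/(λ_{i+1} - λ_i)`. The weights with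
increments exactly `1/g j` make every term of the minimum equal to `1`, so they attain the bound.
-/

def brockettTerms (k : ℕ) (lam α : ℕ → ℝ) : Set ℝ :=
  {α 1 * (lam (k + 1) - lam k)} ∪
    {r : ℝ | ∃ i, 1 ≤ i ∧ i < k ∧ r = (lam (k - i + 1) - lam (k - i)) * (α (i + 1) - α i)}

noncomputable def brockettOptWeights (k : ℕ) (lam : ℕ → ℝ) (i : ℕ) : ℝ :=
  ∑ j ∈ Finset.range i, 1 / (lam (k - j + 1) - lam (k - j))

lemma Finset.sum_range_sub_eq_sum_Icc {M : Type*} [AddCommMonoid M] (k : ℕ) (f : ℕ → M) :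
    ∑ j ∈ Finset.range k, f (k - j) = ∑ i ∈ Finset.Icc 1 k, f i := by
  refine Finset.sum_nbij' (k - ·) (k - ·) ?_ ?_ ?_ ?_ fun _ _ => rfl <;>
    · intro j hj; simp only [Finset.mem_range, Finset.mem_Icc] at hj ⊢; omega

lemma apply_le_apply_of_forall_le_succ {α : Type*} [Preorder α] {f : ℕ → α} {a b : ℕ}
    (hab : a ≤ b) (h : ∀ i, a ≤ i → i < b → f i ≤ f (i + 1)) : f a ≤ f b := by
  induction b, hab using Nat.le_induction with
  | base => exact le_rfl
  | succ m hm ih => exact (ih fun i h1 h2 => h i h1 (by omega)).trans (h m hm (by omega))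

section

variable {k : ℕ} {lam : ℕ → ℝ}

lemma brockettOptWeights_one : brockettOptWeights k lam 1 = 1 / (lam (k + 1) - lam k) := by
  simp [brockettOptWeights]

lemma brockettOptWeights_succ_sub (i : ℕ) :
    brockettOptWeights k lam (i + 1) - brockettOptWeights k lam i
      = 1 / (lam (k - i + 1) - lam (k - i)) := by
  simp [brockettOptWeights, Finset.sum_range_succ]

lemma brockettOptWeights_self :
    brockettOptWeights k lam k = ∑ i ∈ Finset.Icc 1 k, 1 / (lam (i + 1) - lam i) :=
  Finset.sum_range_sub_eq_sum_Icc k fun i => 1 / (lam (i + 1) - lam i)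

end

section

variable {k : ℕ} {lam α : ℕ → ℝ}

lemma brockettDenom_eq_sInf : brockettDenom k lam α = sInf (brockettTerms k lam α) := rfl

lemma brockettTerms_finite : (brockettTerms k lam α).Finite := by
  refine (Set.finite_singleton _).union (((Set.finite_Ico 1 k).image
    fun i => (lam (k - i + 1) - lam (k - i)) * (α (i + 1) - α i)).subset ?_)
  rintro r ⟨i, h1, h2, rfl⟩
  exact ⟨i, ⟨h1, h2⟩, rfl⟩

lemma brockettDenom_mem_brockettTerms : brockettDenom k lam α ∈ brockettTerms k lam α :=
  Set.Nonempty.csInf_mem ⟨_, Or.inl rfl⟩ brockettTerms_finite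

lemma brockettDenom_le_of_mem {r : ℝ} (hr : r ∈ brockettTerms k lam α) :
    brockettDenom k lam α ≤ r :=
  csInf_le brockettTerms_finite.bddBelow hr

lemma brockettDenom_le_first : brockettDenom k lam α ≤ α 1 * (lam (k + 1) - lam k) :=
  brockettDenom_le_of_mem (Or.inl rfl)

lemma brockettDenom_le_step {i : ℕ} (h1 : 1 ≤ i) (h2 : i < k) :
    brockettDenom k lam α ≤ (lam (k - i + 1) - lam (k - i)) * (α (i + 1) - α i) :=
  brockettDenom_le_of_mem (Or.inr ⟨i, h1, h2, rfl⟩)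

lemma brockettDenom_eq_of_forall_eq {c : ℝ} (h1 : α 1 * (lam (k + 1) - lam k) = c)
    (hstep : ∀ i, 1 ≤ i → i < k → (lam (k - i + 1) - lam (k - i)) * (α (i + 1) - α i) = c) :
    brockettDenom k lam α = c := by
  have : brockettTerms k lam α = {c} := by
    refine Set.eq_singleton_iff_unique_mem.2 ⟨Or.inl h1.symm, ?_⟩
    rintro r (h | ⟨i, hi1, hi2, rfl⟩)
    · rw [Set.mem_singleton_iff.1 h, h1]
    · exact hstep i hi1 hi2
  rw [brockettDenom_eq_sInf, this, csInf_singleton]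

variable (hgap : ∀ i, 1 ≤ i → i ≤ k → lam i < lam (i + 1))
include hgap

lemma brockettDenom_pos (hk : 1 ≤ k) (hα : brockettAdm k α) : 0 < brockettDenom k lam α := by
  rcases brockettDenom_mem_brockettTerms with h | ⟨i, h1, h2, h⟩ <;> rw [h]
  · exact mul_pos hα.1 (sub_pos.2 (hgap k hk le_rfl))
  · exact mul_pos (sub_pos.2 (hgap (k - i) (by omega) (by omega))) (sub_pos.2 (hα.2 i h1 h2))

lemma brockettDenom_mul_sum_le {m : ℕ} (hm : 1 ≤ m) (hmk : m ≤ k) :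
    brockettDenom k lam α * brockettOptWeights k lam m ≤ α m := by
  induction m, hm using Nat.le_induction with
  | base =>
    rw [brockettOptWeights_one, mul_one_div, div_le_iff₀ (sub_pos.2 (hgap k hmk le_rfl))]
    exact brockettDenom_le_first
  | succ m hm ih =>
    have hstep :
        brockettDenom k lam α * (1 / (lam (k - m + 1) - lam (k - m))) ≤ α (m + 1) - α m := by
      rw [mul_one_div, div_le_iff₀ (sub_pos.2 (hgap (k - m) (by omega) (by omega))), mul_comm]
      exact brockettDenom_le_step hm (by omega)
    rw [eq_add_of_sub_eq (brockettOptWeights_succ_sub m), mul_add]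
    linarith [ih (by omega)]

end

section

variable {k : ℕ} {lam : ℕ → ℝ} (hgap : ∀ i, 1 ≤ i → i ≤ k → lam i < lam (i + 1)) (hk : 1 ≤ k)
include hgap hk

lemma brockettAdm_brockettOptWeights : brockettAdm k (brockettOptWeights k lam) := by
  refine ⟨?_, fun i h1 h2 => ?_⟩
  · rw [brockettOptWeights_one]
    exact one_div_pos.2 (sub_pos.2 (hgap k hk le_rfl))
  · rw [← sub_pos, brockettOptWeights_succ_sub]
    exact one_div_pos.2 (sub_pos.2 (hgap (k - i) (by omega) (by omega)))

lemma brockettDenom_brockettOptWeights : brockettDenom k lam (brockettOptWeights k lam) = 1 := by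
  refine brockettDenom_eq_of_forall_eq ?_ fun i h1 h2 => ?_
  · rw [brockettOptWeights_one, one_div_mul_cancel (sub_pos.2 (hgap k hk le_rfl)).ne']
  · rw [brockettOptWeights_succ_sub, mul_one_div_cancel
      (sub_pos.2 (hgap (k - i) (by omega) (by omega))).ne']

end

theorem stmt18 (k n : ℕ) (hk : 1 ≤ k) (hkn : k + 1 ≤ n)
    (lam : ℕ → ℝ)
    (hstrict : ∀ i, 1 ≤ i → i ≤ k → lam i < lam (i + 1))
    (hmono : ∀ i, k + 1 ≤ i → i < n → lam i ≤ lam (i + 1)) :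
    IsLeast {r : ℝ | ∃ α : ℕ → ℝ, brockettAdm k α ∧ r = brockettKappa k n lam α}
        ((lam n - lam 1) * ∑ i ∈ Finset.Icc 1 k, 1 / (lam (i + 1) - lam i)) ∧
      brockettKappa k n lam
          (fun i => ∑ j ∈ Finset.range i, 1 / (lam (k - j + 1) - lam (k - j)))
        = (lam n - lam 1) * ∑ i ∈ Finset.Icc 1 k, 1 / (lam (i + 1) - lam i) := by
  have hopt : brockettKappa k n lam (brockettOptWeights k lam)
      = (lam n - lam 1) * ∑ i ∈ Finset.Icc 1 k, 1 / (lam (i + 1) - lam i) := by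
    rw [brockettKappa, brockettDenom_brockettOptWeights hstrict hk, div_one,
      brockettOptWeights_self, mul_comm]
  refine ⟨⟨⟨_, brockettAdm_brockettOptWeights hstrict hk, hopt.symm⟩, ?_⟩, hopt⟩
  rintro _ ⟨α, hα, rfl⟩
  have hD := brockettDenom_pos hstrict hk hα
  have hbound := brockettDenom_mul_sum_le (α := α) hstrict hk le_rfl
  rw [brockettOptWeights_self] at hbound
  have hspread : lam 1 ≤ lam n := apply_le_apply_of_forall_le_succ (by omega) fun i h1 h2 =>
    (le_or_gt i k).elim (fun h => (hstrict i h1 h).le) (fun h => hmono i h h2)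
  rw [brockettKappa, le_div_iff₀ hD]
  linarith [mul_le_mul_of_nonneg_left hbound (sub_nonneg.2 hspread)]
end
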